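/- arXiv:2302.06125 — 5 statements merged into one kernel-verified Lean document; each statement's English description precedes it below -/
import Mathlib

section
/- The proper conflict-free chromatic number of the 5-cycle C₅ equals 5. -/
open SimpleGraph

variable {V : Type*}

/-- Number of times color `a` appears on the neighborhood of `v`. -/
noncomputable def colMult (G : SimpleGraph V) (c : V → ℕ) (v : V) (a : ℕ) : ℕ :=
  {u | G.Adj v u ∧ c u = a}.ncard

/-- A proper `k`-coloring, with colors `0, …, k-1`. -/
def IsProperCol (G : SimpleGraph V) (k : ℕ) (c : V → ℕ) : Prop :=
  (∀ v, c v < k) ∧ ∀ u v, G.Adj u v → c u ≠ c v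

/-- An odd `k`-coloring. -/
def IsOddCol (G : SimpleGraph V) (k : ℕ) (c : V → ℕ) : Prop :=
  IsProperCol G k c ∧ ∀ v, (∃ u, G.Adj v u) → ∃ a, Odd (colMult G c v a)

/-- A proper conflict-free `k`-coloring. -/
def IsPCFCol (G : SimpleGraph V) (k : ℕ) (c : V → ℕ) : Prop :=
  IsProperCol G k c ∧ ∀ v, (∃ u, G.Adj v u) → ∃ a, colMult G c v a = 1

/-- Degree as the size of the neighborhood. -/
noncomputable def deg (G : SimpleGraph V) (v : V) : ℕ := (G.neighborSet v).ncard

/-- Maximum degree. -/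
noncomputable def maxDeg (G : SimpleGraph V) : ℕ := sSup (Set.range fun v => deg G v)

/-- A proper `h`-conflict-free `k`-coloring: every vertex `v` has at least
`min (deg v) h` colors appearing exactly once on its neighborhood. -/
def IsHCFCol (G : SimpleGraph V) (h k : ℕ) (c : V → ℕ) : Prop :=
  IsProperCol G k c ∧ ∀ v, min (deg G v) h ≤ {a | colMult G c v a = 1}.ncard

/-- An `h`-dynamic `k`-coloring: every vertex sees at least `min (deg v) h` colors. -/
def IsDynCol (G : SimpleGraph V) (h k : ℕ) (c : V → ℕ) : Prop :=
  IsProperCol G k c ∧ ∀ v, min (deg G v) h ≤ (c '' G.neighborSet v).ncard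

noncomputable def chi (G : SimpleGraph V) : ℕ := sInf {k | ∃ c, IsProperCol G k c}
noncomputable def chiOdd (G : SimpleGraph V) : ℕ := sInf {k | ∃ c, IsOddCol G k c}
noncomputable def chiPCF (G : SimpleGraph V) : ℕ := sInf {k | ∃ c, IsPCFCol G k c}
noncomputable def chiHPCF (G : SimpleGraph V) (h : ℕ) : ℕ := sInf {k | ∃ c, IsHCFCol G h k c}

/-- The square of a graph. -/
def graphSq (G : SimpleGraph V) : SimpleGraph V where
  Adj u v := u ≠ v ∧ (G.Adj u v ∨ ∃ w, G.Adj u w ∧ G.Adj w v)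
  symm := ⟨by
    rintro u v ⟨h1, h2 | ⟨w, hw1, hw2⟩⟩
    · exact ⟨h1.symm, Or.inl h2.symm⟩
    · exact ⟨h1.symm, Or.inr ⟨w, hw2.symm, hw1.symm⟩⟩⟩
  loopless := ⟨fun v h => h.1 rfl⟩

/-- The 5-cycle on `ZMod 5`. -/
def C5 : SimpleGraph (ZMod 5) := SimpleGraph.fromRel (fun u v => v = u + 1)


lemma adjC5 : ∀ v u : ZMod 5, C5.Adj v u ↔ u = v - 1 ∨ u = v + 1 := by
  simp only [C5, SimpleGraph.fromRel_adj]
  decide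

lemma nbhdC5 (v : ZMod 5) : {u | C5.Adj v u} = {v - 1, v + 1} := by
  ext u; simp [adjC5]

lemma colMultC5 (c : ZMod 5 → ℕ) (v : ZMod 5) (a : ℕ) :
    colMult C5 c v a = ({u | u ∈ ({v - 1, v + 1} : Set (ZMod 5)) ∧ c u = a}).ncard := by
  unfold colMult
  congr 1
  ext u
  simp [adjC5]

lemma pcf_key (k : ℕ) (c : ZMod 5 → ℕ) (h : IsPCFCol C5 k c) :
    (∀ v : ZMod 5, c v ≠ c (v + 1)) ∧ (∀ v : ZMod 5, c (v - 1) ≠ c (v + 1)) := by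
  obtain ⟨⟨hlt, hprop⟩, hcf⟩ := h
  constructor
  · intro v
    exact hprop v (v+1) ((adjC5 v (v+1)).2 (Or.inr rfl))
  · intro v hbad
    obtain ⟨a, ha⟩ := hcf v ⟨v + 1, (adjC5 v (v+1)).2 (Or.inr rfl)⟩
    rw [colMultC5] at ha
    have hne : (v : ZMod 5) - 1 ≠ v + 1 := by
      intro h; apply (by decide : (2 : ZMod 5) ≠ 0)
      have := congrArg (fun x => x - v + 1) h
      simpa [sub_sub, add_sub_cancel_left, one_add_one_eq_two] using this.symm
    by_cases hab : a = c (v + 1)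
    · have : {u | u ∈ ({v - 1, v + 1} : Set (ZMod 5)) ∧ c u = a} = {v - 1, v + 1} := by
        ext u
        constructor
        · rintro ⟨h1, _⟩; exact h1
        · rintro (rfl | rfl)
          · exact ⟨Or.inl rfl, by rw [hbad, hab]⟩
          · exact ⟨Or.inr rfl, hab.symm⟩
      rw [this, Set.ncard_pair hne] at ha
      omega
    · have : {u | u ∈ ({v - 1, v + 1} : Set (ZMod 5)) ∧ c u = a} = ∅ := by
        ext u
        simp only [Set.mem_empty_iff_false, iff_false]
        rintro ⟨(rfl | rfl), h2⟩
        · exact hab (by rw [← h2, hbad])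
        · exact hab h2.symm
      rw [this, Set.ncard_empty] at ha
      omega

lemma no_pcf4 (k : ℕ) (hk : k < 5) (c : ZMod 5 → ℕ) (h : IsPCFCol C5 k c) : False := by
  obtain ⟨h1, h2⟩ := pcf_key k c h
  have hlt : ∀ v, c v < 4 := fun v => lt_of_lt_of_le (h.1.1 v) (by omega)
  have : ¬ Function.Injective (fun v : ZMod 5 => (⟨c v, hlt v⟩ : Fin 4)) := by
    intro hinj
    have := Fintype.card_le_of_injective _ hinj
    simp [ZMod.card] at this
  rw [Function.not_injective_iff] at this
  obtain ⟨i, j, hij, hne⟩ := this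
  have hc : c i = c j := by simpa using congrArg Fin.val hij
  have hd : j - i = 1 ∨ j - i = 2 ∨ j - i = 3 ∨ j - i = 4 := by
    have h0 : j - i ≠ 0 := fun h => hne (by
      have := congrArg (· + i) h; simpa [sub_add_cancel] using this.symm)
    revert h0; generalize j - i = d; revert d; decide
  have hji : j = i + (j - i) := by ring
  rcases hd with h | h | h | h
  · exact h1 i (by rw [hc, hji, h])
  · apply h2 (i + 1)
    rw [add_sub_cancel_right]
    have hj : j = i + 1 + 1 := by rw [hji, h]; ring
    rw [← hj]; exact hc
  · apply h2 (j + 1)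
    rw [add_sub_cancel_right]
    have hij2 : i - j = 2 := by
      rw [show (2 : ZMod 5) = -3 by decide, ← h]; ring
    have hi : i = j + 1 + 1 := by
      have := eq_add_of_sub_eq hij2; rw [this]; ring
    rw [← hi, ← hc]
  · apply h1 j
    have key : j + 1 = i := by
      rw [hji, h, add_assoc, show (4 : ZMod 5) + 1 = 0 by decide, add_zero]
    rw [key, ← hc]

lemma upper5 : IsPCFCol C5 5 (fun v : ZMod 5 => v.val) := by
  refine ⟨⟨fun v => v.val_lt, fun u v huv h => ?_⟩, fun v _ => ?_⟩
  · exact huv.ne (ZMod.val_injective 5 h)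
  · refine ⟨(v + 1).val, ?_⟩
    rw [colMultC5]
    have : {u | u ∈ ({v - 1, v + 1} : Set (ZMod 5)) ∧ u.val = (v + 1).val}
        = {v + 1} := by
      ext u
      constructor
      · rintro ⟨_, h2⟩
        exact ZMod.val_injective 5 h2
      · rintro rfl
        exact ⟨Or.inr rfl, rfl⟩
    rw [this, Set.ncard_singleton]

/-- χ_pcf(C₅) = 5. -/
theorem stmt_2 : chiPCF C5 = 5 := by
  have h5 : 5 ∈ {k | ∃ c, IsPCFCol C5 k c} := ⟨_, upper5⟩
  refine le_antisymm (Nat.sInf_le h5) (le_csInf ⟨5, h5⟩ ?_)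
  rintro k ⟨c, hc⟩
  by_contra h
  exact no_pcf4 k (by omega) c hc
end

section
/- For every graph G and every positive integer h with h ≥ Δ(G) − 1, the proper h-conflict-free chromatic number of G equals the chromatic number of the square of G: χ^h_pcf(G) = χ(G²). -/
open SimpleGraph

variable {V : Type*}

lemma sq_to_hcf {V : Type*} [Fintype V] (G : SimpleGraph V) (h k : ℕ) (c : V → ℕ)
    (hc : IsProperCol (graphSq G) k c) : IsHCFCol G h k c := by
  obtain ⟨hlt, hne⟩ := hc
  have hproper : ∀ u v, G.Adj u v → c u ≠ c v := fun u v huv =>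
    hne u v ⟨huv.ne, Or.inl huv⟩
  refine ⟨⟨hlt, hproper⟩, fun v => ?_⟩
  have hinj : Set.InjOn c (G.neighborSet v) := by
    intro x hx y hy hxy
    by_contra hne'
    exact hne x y ⟨hne', Or.inr ⟨v, (hx : G.Adj v x).symm, hy⟩⟩ hxy
  have hsub : c '' (G.neighborSet v) ⊆ {a | colMult G c v a = 1} := by
    rintro a ⟨u, hu, rfl⟩
    have hs : {x | G.Adj v x ∧ c x = c u} = {u} := by
      ext x
      simp only [Set.mem_setOf_eq, Set.mem_singleton_iff]
      constructor
      · rintro ⟨hx, hcx⟩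
        exact hinj hx hu hcx
      · rintro rfl; exact ⟨hu, rfl⟩
    simp [colMult, hs]
  have hsup : {a | colMult G c v a = 1} ⊆ c '' G.neighborSet v := by
    intro a ha
    have ha' : {x | G.Adj v x ∧ c x = a}.ncard = 1 := ha
    have hne0 : {x | G.Adj v x ∧ c x = a}.Nonempty := by
      rw [Set.nonempty_iff_ne_empty]
      intro he
      rw [he] at ha'
      simp at ha'
    obtain ⟨x, hx1, hx2⟩ := hne0
    exact ⟨x, hx1, hx2⟩
  calc min (deg G v) h ≤ deg G v := min_le_left _ _
    _ = (c '' G.neighborSet v).ncard := (Set.ncard_image_of_injOn hinj).symm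
    _ ≤ _ := Set.ncard_le_ncard hsub ((Set.toFinite _).subset hsup)

lemma hcf_to_sq {V : Type*} [Fintype V] (G : SimpleGraph V) (h k : ℕ) (c : V → ℕ)
    (hh : maxDeg G - 1 ≤ h)
    (hc : IsHCFCol G h k c) : IsProperCol (graphSq G) k c := by
  obtain ⟨⟨hlt, hproper⟩, hcf⟩ := hc
  refine ⟨hlt, ?_⟩
  rintro u v ⟨huv, hadj | ⟨w, hw1, hw2⟩⟩
  · exact hproper u v hadj
  · intro hcc
    have hu : u ∈ G.neighborSet w := hw1.symm
    have hv : v ∈ G.neighborSet w := hw2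
    have hsub2 : ({u, v} : Set V) ⊆ G.neighborSet w := by
      rintro x (rfl | rfl) <;> assumption
    have hdeg2 : 2 ≤ deg G w := by
      have := Set.ncard_le_ncard hsub2 (Set.toFinite _)
      rwa [Set.ncard_pair huv] at this
    have hdegh : deg G w - 1 ≤ h := by
      have : deg G w ≤ maxDeg G :=
        le_csSup (Set.Finite.bddAbove (Set.finite_range _)) ⟨w, rfl⟩
      omega
    have hmin : deg G w - 1 ≤ min (deg G w) h := le_min (by omega) hdegh
    have hS : {a | colMult G c w a = 1} ⊆ c '' (G.neighborSet w \ {u, v}) := by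
      intro a ha
      have ha' : {x | G.Adj w x ∧ c x = a}.ncard = 1 := ha
      have hane : a ≠ c u := by
        rintro rfl
        have hsub3 : ({u, v} : Set V) ⊆ {x | G.Adj w x ∧ c x = c u} := by
          rintro x (rfl | rfl)
          · exact ⟨hw1.symm, rfl⟩
          · exact ⟨hw2, hcc.symm⟩
        have h2 := Set.ncard_le_ncard hsub3 (Set.toFinite _)
        rw [Set.ncard_pair huv] at h2
        omega
      have hne0 : {x | G.Adj w x ∧ c x = a}.Nonempty := by
        rw [Set.nonempty_iff_ne_empty]
        intro he
        rw [he] at ha'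
        simp at ha'
      obtain ⟨x, hx1, hx2⟩ := hne0
      refine ⟨x, ⟨hx1, ?_⟩, hx2⟩
      rintro (rfl | rfl)
      · exact hane hx2.symm
      · exact hane (hx2.symm.trans hcc.symm)
    have hScard := Set.ncard_le_ncard hS (Set.toFinite _)
    have himg : (c '' (G.neighborSet w \ {u, v})).ncard ≤ (G.neighborSet w \ {u, v}).ncard :=
      Set.ncard_image_le (Set.toFinite _)
    have hdiff : (G.neighborSet w \ {u, v}).ncard = deg G w - 2 := by
      rw [Set.ncard_diff hsub2 (Set.toFinite _), Set.ncard_pair huv]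
      rfl
    have hw' := hcf w
    omega

/-- if h ≥ Δ(G) − 1 then χ^h_pcf(G) = χ(G²). -/
theorem stmt_3 {V : Type*} [Fintype V] (G : SimpleGraph V) (h : ℕ)
    (h1 : 1 ≤ h) (hh : maxDeg G - 1 ≤ h) :
    chiHPCF G h = chi (graphSq G) := by
  have hset : {k | ∃ c, IsHCFCol G h k c} = {k | ∃ c, IsProperCol (graphSq G) k c} := by
    ext k
    constructor
    · rintro ⟨c, hc⟩; exact ⟨c, hcf_to_sq G h k c hh hc⟩
    · rintro ⟨c, hc⟩; exact ⟨c, sq_to_hcf G h k c hc⟩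
  unfold chiHPCF chi
  rw [hset]
end

section
/- Let n ≥ 2 be such that there exist n−1 mutually orthogonal Latin squares of order n, and let G_n be the graph built from them as follows: vertices are v_{i,j} for i,j ∈ [n], s_{k,i} for k ∈ [n−1], i ∈ [n], r_i and c_i for i ∈ [n]; each v_{i,j} is adjacent to r_i, to c_j, and to s_{k,L_k(i,j)} for each k ∈ [n−1]. Then Δ(G_n) = n+1 and in any proper (n−1)-conflict-free coloring of G_n, all n² vertices v_{i,j} receive pairwise distinct colors; hence χ^{n−1}_pcf(G_n) ≥ n² = n·(Δ(G_n) − 1). -/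
open SimpleGraph

variable {V : Type*}

/-- Vertex set of the Latin-square graph `G_n`: `v`-vertices, `s`-vertices, `r`- and `c`-vertices. -/
abbrev LatinVerts (n : ℕ) : Type :=
  (Fin n × Fin n) ⊕ ((Fin (n - 1) × Fin n) ⊕ (Fin n ⊕ Fin n))

/-- The base relation: `v_{i,j}` is related to `r_i`, `c_j`, and `s_{k, L_k(i,j)}`. -/
def latinRel (n : ℕ) (L : Fin (n - 1) → Fin n → Fin n → Fin n) :
    LatinVerts n → LatinVerts n → Prop
  | Sum.inl (i, _), Sum.inr (Sum.inr (Sum.inl i')) => i = i'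
  | Sum.inl (_, j), Sum.inr (Sum.inr (Sum.inr j')) => j = j'
  | Sum.inl (i, j), Sum.inr (Sum.inl (k, s)) => L k i j = s
  | _, _ => False

/-- The graph `G_n` built from the Latin squares. -/
def latinGraph (n : ℕ) (L : Fin (n - 1) → Fin n → Fin n → Fin n) :
    SimpleGraph (LatinVerts n) :=
  SimpleGraph.fromRel (latinRel n L)
namespace Stmt6Aux

variable {n : ℕ} (L : Fin (n - 1) → Fin n → Fin n → Fin n)

abbrev vv (i j : Fin n) : LatinVerts n := Sum.inl (i, j)
abbrev sv (k : Fin (n - 1)) (s : Fin n) : LatinVerts n := Sum.inr (Sum.inl (k, s))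
abbrev rv (i : Fin n) : LatinVerts n := Sum.inr (Sum.inr (Sum.inl i))
abbrev cv (j : Fin n) : LatinVerts n := Sum.inr (Sum.inr (Sum.inr j))

lemma nb_rv (i : Fin n) :
    (latinGraph n L).neighborSet (rv i) = Set.range fun j => (vv i j : LatinVerts n) := by
  ext y
  rcases y with ⟨i', j'⟩ | ⟨⟨k, s⟩ | i' | j'⟩ <;>
    simp [latinGraph, latinRel, SimpleGraph.fromRel_adj, vv, rv, eq_comm, Prod.ext_iff]

lemma nb_cv (j : Fin n) :
    (latinGraph n L).neighborSet (cv j) = Set.range fun i => (vv i j : LatinVerts n) := by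
  ext y
  rcases y with ⟨i', j'⟩ | ⟨⟨k, s⟩ | i' | j'⟩ <;>
    simp [latinGraph, latinRel, SimpleGraph.fromRel_adj, vv, cv, eq_comm, Prod.ext_iff]

lemma nb_sv (k : Fin (n - 1)) (s : Fin n) :
    (latinGraph n L).neighborSet (sv k s) =
      Sum.inl '' {p : Fin n × Fin n | L k p.1 p.2 = s} := by
  ext y
  rcases y with ⟨i', j'⟩ | ⟨⟨k', s'⟩ | i' | j'⟩ <;>
    simp [latinGraph, latinRel, SimpleGraph.fromRel_adj, vv, sv, eq_comm, Prod.ext_iff]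

lemma nb_vv (i j : Fin n) :
    (latinGraph n L).neighborSet (vv i j) =
      insert (rv i) (insert (cv j)
        (Set.range fun k : Fin (n - 1) => (sv k (L k i j) : LatinVerts n))) := by
  ext y
  rcases y with ⟨i', j'⟩ | ⟨⟨k', s'⟩ | i' | j'⟩ <;>
    simp [latinGraph, latinRel, SimpleGraph.fromRel_adj, vv, sv, rv, cv, eq_comm, Prod.ext_iff]

lemma ncard_range_fin {m : ℕ} {α : Type*} (f : Fin m → α) (hf : Function.Injective f) :
    (Set.range f).ncard = m := by
  rw [← Set.image_univ, Set.ncard_image_of_injective _ hf, Set.ncard_univ,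
    Nat.card_eq_fintype_card, Fintype.card_fin]

lemma deg_rv (i : Fin n) : deg (latinGraph n L) (rv i) = n := by
  rw [deg, nb_rv, ncard_range_fin]
  intro a b h
  simpa [vv, Prod.ext_iff] using h

lemma deg_cv (j : Fin n) : deg (latinGraph n L) (cv j) = n := by
  rw [deg, nb_cv, ncard_range_fin]
  intro a b h
  simpa [vv, Prod.ext_iff] using h

lemma deg_sv (hrow : ∀ k i, Function.Injective (L k i)) (k : Fin (n - 1)) (s : Fin n) :
    deg (latinGraph n L) (sv k s) = n := by
  have hbij : ∀ i, Function.Bijective (L k i) :=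
    fun i => Finite.injective_iff_bijective.1 (hrow k i)
  choose g hg using fun i => (hbij i).surjective s
  have hset : {p : Fin n × Fin n | L k p.1 p.2 = s} = Set.range fun i => (i, g i) := by
    ext ⟨i, j⟩
    simp only [Set.mem_setOf_eq, Set.mem_range, Prod.mk.injEq]
    constructor
    · intro h
      exact ⟨i, rfl, (hrow k i (h.trans (hg i).symm)).symm⟩
    · rintro ⟨i', rfl, rfl⟩
      exact hg _
  rw [deg, nb_sv, hset, Set.ncard_image_of_injective _ Sum.inl_injective, ncard_range_fin]
  intro a b h
  exact (Prod.ext_iff.1 h).1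

lemma deg_vv (hn : 1 ≤ n) (i j : Fin n) : deg (latinGraph n L) (vv i j) = n + 1 := by
  rw [deg, nb_vv]
  have h1 : (Set.range fun k : Fin (n - 1) => (sv k (L k i j) : LatinVerts n)).ncard = n - 1 := by
    apply ncard_range_fin
    intro a b h
    have h2 : a = b ∧ L a i j = L b i j := by simpa [sv, Prod.ext_iff] using h
    exact h2.1
  rw [Set.ncard_insert_of_notMem (by simp [rv, cv, sv]) (Set.toFinite _),
    Set.ncard_insert_of_notMem (by simp [cv, sv]) (Set.toFinite _), h1]
  omega
lemma deg_le (hn : 1 ≤ n) (hrow : ∀ k i, Function.Injective (L k i)) (v : LatinVerts n) :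
    deg (latinGraph n L) v ≤ n + 1 := by
  rcases v with ⟨i, j⟩ | ⟨⟨k, s⟩ | i | j⟩
  · exact le_of_eq (deg_vv L hn i j)
  · rw [deg_sv L hrow]; omega
  · rw [deg_rv]; omega
  · rw [deg_cv]; omega

lemma maxDeg_eq (hn : 2 ≤ n) (hrow : ∀ k i, Function.Injective (L k i)) :
    maxDeg (latinGraph n L) = n + 1 := by
  have hn1 : 1 ≤ n := by omega
  have i0 : Fin n := ⟨0, by omega⟩
  apply le_antisymm
  · refine csSup_le ⟨deg (latinGraph n L) (vv i0 i0), ⟨vv i0 i0, rfl⟩⟩ ?_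
    rintro x ⟨v, rfl⟩
    exact deg_le L hn1 hrow v
  · refine le_csSup ⟨n + 1, ?_⟩ ⟨vv i0 i0, deg_vv L hn1 i0 i0⟩
    rintro x ⟨v, rfl⟩
    exact deg_le L hn1 hrow v

/-- In an HCF coloring, neighbors of a vertex of degree `h+1` (with `h ≥ 1`) get
distinct colors. -/
lemma hcf_nbr_inj {V : Type*} [Finite V] {G : SimpleGraph V} {h k : ℕ} {c : V → ℕ}
    (hc : IsHCFCol G h k c) {w : V} (hh : 1 ≤ h) (hdeg : deg G w = h + 1) :
    Set.InjOn c (G.neighborSet w) := by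
  by_contra hinj
  simp only [Set.InjOn, not_forall] at hinj
  obtain ⟨u₁, hu₁, u₂, hu₂, hcc, hne⟩ := hinj
  have hsub : {a | colMult G c w a = 1} ⊆ c '' (G.neighborSet w \ {u₁, u₂}) := by
    intro a ha
    obtain ⟨u, hu⟩ := Set.ncard_eq_one.1 ha
    have hmem : u ∈ {u' | G.Adj w u' ∧ c u' = a} := hu ▸ rfl
    refine ⟨u, ⟨hmem.1, ?_⟩, hmem.2⟩
    rintro (rfl | rfl)
    · have : u₂ ∈ {u' | G.Adj w u' ∧ c u' = a} := ⟨hu₂, hcc ▸ hmem.2⟩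
      rw [hu] at this
      exact hne (this.symm)
    · have : u₁ ∈ {u' | G.Adj w u' ∧ c u' = a} := ⟨hu₁, hcc.symm ▸ hmem.2⟩
      rw [hu] at this
      exact hne this
  have h2 : ({u₁, u₂} : Set V) ⊆ G.neighborSet w := by
    rintro x (rfl | rfl) <;> assumption
  have hcard : (G.neighborSet w \ {u₁, u₂}).ncard = h - 1 := by
    rw [Set.ncard_diff h2 (Set.toFinite _), Set.ncard_pair hne]
    change deg G w - 2 = h - 1
    omega
  have := hc.2 w
  rw [hdeg] at this
  have hle : {a | colMult G c w a = 1}.ncard ≤ h - 1 := by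
    calc {a | colMult G c w a = 1}.ncard
        ≤ (c '' (G.neighborSet w \ {u₁, u₂})).ncard :=
          Set.ncard_le_ncard hsub (Set.toFinite _)
      _ ≤ (G.neighborSet w \ {u₁, u₂}).ncard := Set.ncard_image_le (Set.toFinite _)
      _ = h - 1 := hcard
  omega
lemma exists_agree (_hn : 2 ≤ n)
    (hrow : ∀ k i, Function.Injective (L k i))
    (hcol : ∀ (k) (j : Fin n), Function.Injective (fun i => L k i j))
    (horth : ∀ k k', k ≠ k' →
      Function.Injective (fun p : Fin n × Fin n => (L k p.1 p.2, L k' p.1 p.2)))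
    {i i' j j' : Fin n} (hi : i ≠ i') (hj : j ≠ j') :
    ∃ k, L k i j = L k i' j' := by
  have hbij : ∀ k, Function.Bijective (L k i') :=
    fun k => Finite.injective_iff_bijective.1 (hrow k i')
  choose g hg using fun k => (hbij k).surjective (L k i j)
  have hgj : ∀ k, g k ≠ j := by
    intro k h
    apply hi
    exact hcol k j (by simpa [h] using (hg k).symm)
  have hF : Function.Injective (fun k : Fin (n - 1) => (⟨g k, hgj k⟩ : {x : Fin n // x ≠ j})) := by
    intro k k' hkk
    by_contra hne
    have hgk : g k = g k' := congrArg Subtype.val hkk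
    have : ((i : Fin n), j) = (i', g k) := by
      apply horth k k' hne
      simp only [Prod.mk.injEq]
      exact ⟨(hg k).symm, by rw [hgk]; exact (hg k').symm⟩
    exact hi (Prod.ext_iff.1 this).1
  have hcard : Fintype.card {x : Fin n // x ≠ j} = n - 1 := by
    simp [Fintype.card_subtype_compl]
  have hFb : Function.Bijective (fun k : Fin (n - 1) => (⟨g k, hgj k⟩ : {x : Fin n // x ≠ j})) := by
    rw [Fintype.bijective_iff_injective_and_card]
    exact ⟨hF, by simp [hcard]⟩
  obtain ⟨k, hk⟩ := hFb.surjective ⟨j', Ne.symm hj⟩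
  refine ⟨k, ?_⟩
  have : g k = j' := congrArg Subtype.val hk
  rw [← this, hg k]

lemma vv_inj (hn : 2 ≤ n)
    (hrow : ∀ k i, Function.Injective (L k i))
    (hcol : ∀ (k) (j : Fin n), Function.Injective (fun i => L k i j))
    (horth : ∀ k k', k ≠ k' →
      Function.Injective (fun p : Fin n × Fin n => (L k p.1 p.2, L k' p.1 p.2)))
    {kk : ℕ} {c : LatinVerts n → ℕ} (hc : IsHCFCol (latinGraph n L) (n - 1) kk c) :
    Function.Injective (fun p : Fin n × Fin n => c (Sum.inl p)) := by
  have hh : 1 ≤ n - 1 := by omega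
  have hdeg : n = (n - 1) + 1 := by omega
  rintro ⟨i, j⟩ ⟨i', j'⟩ hcc
  simp only at hcc
  by_cases hii : i = i'
  · subst hii
    have h1 := hcf_nbr_inj hc hh (by rw [deg_rv]; omega : deg (latinGraph n L) (rv i) = (n-1)+1)
    have m1 : (vv i j : LatinVerts n) ∈ (latinGraph n L).neighborSet (rv i) := by
      rw [nb_rv]; exact ⟨j, rfl⟩
    have m2 : (vv i j' : LatinVerts n) ∈ (latinGraph n L).neighborSet (rv i) := by
      rw [nb_rv]; exact ⟨j', rfl⟩
    have := h1 m1 m2 hcc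
    simpa [vv, Prod.ext_iff] using this
  · by_cases hjj : j = j'
    · subst hjj
      have h1 := hcf_nbr_inj hc hh (by rw [deg_cv]; omega : deg (latinGraph n L) (cv j) = (n-1)+1)
      have m1 : (vv i j : LatinVerts n) ∈ (latinGraph n L).neighborSet (cv j) := by
        rw [nb_cv]; exact ⟨i, rfl⟩
      have m2 : (vv i' j : LatinVerts n) ∈ (latinGraph n L).neighborSet (cv j) := by
        rw [nb_cv]; exact ⟨i', rfl⟩
      have := h1 m1 m2 hcc
      simpa [vv, Prod.ext_iff] using this
    · obtain ⟨k, hk⟩ := exists_agree L hn hrow hcol horth hii hjj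
      have h1 := hcf_nbr_inj hc hh
        (by rw [deg_sv L hrow]; omega : deg (latinGraph n L) (sv k (L k i j)) = (n-1)+1)
      have m1 : (vv i j : LatinVerts n) ∈ (latinGraph n L).neighborSet (sv k (L k i j)) := by
        rw [nb_sv]; exact ⟨(i, j), rfl, rfl⟩
      have m2 : (vv i' j' : LatinVerts n) ∈ (latinGraph n L).neighborSet (sv k (L k i j)) := by
        rw [nb_sv]; exact ⟨(i', j'), hk.symm, rfl⟩
      have := h1 m1 m2 hcc
      simpa [vv, Prod.ext_iff] using this
lemma exists_hcf {V : Type*} [Fintype V] [DecidableEq V] (G : SimpleGraph V) (h : ℕ) :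
    ∃ kk c, IsHCFCol G h kk c := by
  classical
  let e := Fintype.equivFin V
  refine ⟨Fintype.card V, fun v => (e v : ℕ), ⟨fun v => (e v).isLt,
    fun u v huv hcc => huv.ne (e.injective (Fin.ext hcc))⟩, ?_⟩
  intro v
  have hinj : Function.Injective fun v : V => ((e v : ℕ)) :=
    fun a b hab => e.injective (Fin.ext hab)
  have hsub : (fun v : V => ((e v : ℕ))) '' G.neighborSet v ⊆
      {a | colMult G (fun v => ((e v : ℕ))) v a = 1} := by
    rintro a ⟨u, hu, rfl⟩
    have : {u' | G.Adj v u' ∧ (e u' : ℕ) = (e u : ℕ)} = {u} := by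
      ext u'
      simp only [Set.mem_setOf_eq, Set.mem_singleton_iff]
      constructor
      · rintro ⟨_, h2⟩; exact hinj h2
      · rintro rfl; exact ⟨hu, rfl⟩
    simp [colMult, this]
  calc min (deg G v) h ≤ deg G v := min_le_left _ _
    _ = ((fun v : V => ((e v : ℕ))) '' G.neighborSet v).ncard :=
        (Set.ncard_image_of_injective _ hinj).symm
    _ ≤ _ := by
        refine Set.ncard_le_ncard hsub ?_
        apply (Set.finite_range fun v : V => ((e v : ℕ))).subset
        intro a ha
        obtain ⟨u, hu⟩ := Set.ncard_eq_one.1 ha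
        have : u ∈ {u' | G.Adj v u' ∧ (e u' : ℕ) = a} := hu ▸ rfl
        exact ⟨u, this.2⟩

end Stmt6Aux


/-- for `n ≥ 2` and a family of `n−1` mutually orthogonal Latin squares of
order `n`, the graph `G_n` has `Δ(G_n) = n+1`, in any proper `(n−1)`-conflict-free coloring
all vertices `v_{i,j}` get distinct colors, and hence `χ^{n−1}_pcf(G_n) ≥ n² = n(Δ(G_n)−1)`. -/
theorem stmt_6 (n : ℕ) (hn : 2 ≤ n) (L : Fin (n - 1) → Fin n → Fin n → Fin n)
    (hrow : ∀ k i, Function.Injective (L k i))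
    (hcol : ∀ (k) (j : Fin n), Function.Injective (fun i => L k i j))
    (horth : ∀ k k', k ≠ k' →
      Function.Injective (fun p : Fin n × Fin n => (L k p.1 p.2, L k' p.1 p.2))) :
    maxDeg (latinGraph n L) = n + 1 ∧
    (∀ (kk : ℕ) (c : LatinVerts n → ℕ), IsHCFCol (latinGraph n L) (n - 1) kk c →
      Function.Injective (fun p : Fin n × Fin n => c (Sum.inl p))) ∧
    n ^ 2 ≤ chiHPCF (latinGraph n L) (n - 1) ∧
    n ^ 2 = n * (maxDeg (latinGraph n L) - 1) := by
  have hmax := Stmt6Aux.maxDeg_eq L hn hrow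
  have hinj := fun kk c hc => Stmt6Aux.vv_inj L hn hrow hcol horth (kk := kk) (c := c) hc
  refine ⟨hmax, hinj, ?_, by rw [hmax]; simp [pow_two]⟩
  have hne : {k | ∃ c, IsHCFCol (latinGraph n L) (n - 1) k c}.Nonempty := by
    obtain ⟨kk, c, hc⟩ := Stmt6Aux.exists_hcf (latinGraph n L) (n - 1)
    exact ⟨kk, c, hc⟩
  refine le_csInf hne ?_
  rintro kk ⟨c, hc⟩
  have h1 := hinj kk c hc
  have F : Fin n × Fin n → Fin kk := fun p => ⟨c (Sum.inl p), hc.1.1 _⟩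
  have hF : Function.Injective fun p : Fin n × Fin n => (⟨c (Sum.inl p), hc.1.1 _⟩ : Fin kk) :=
    fun a b hab => h1 (congrArg Fin.val hab)
  have := Fintype.card_le_of_injective _ hF
  simpa [pow_two] using this
end

section
/- A minimal counterexample is 2-edge-connected: let h ≥ 1 and suppose G is a graph with Δ(G) ≥ h+2 that has no proper h-conflict-free ((h+1)Δ(G)−1)-coloring, and that every graph H with |V(H)|+|E(H)| < |V(G)|+|E(G)| and Δ(H) ≤ Δ(G) has a proper h-conflict-free ((h+1)Δ(G)−1)-coloring. Then G has no cut-edge. -/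
open SimpleGraph

variable {V : Type*}

section Helpers

/-- Existence of a color permutation sending `B` off of `A`. -/
lemma exists_sigma (k : ℕ) (A B : Set ℕ) (hA : ∀ a ∈ A, a < k) (hB : ∀ b ∈ B, b < k)
    (hAf : A.Finite) (hBf : B.Finite) (hcard : A.ncard + B.ncard ≤ k) :
    ∃ σ : ℕ → ℕ, Function.Injective σ ∧ (∀ n, n < k → σ n < k) ∧ ∀ b ∈ B, σ b ∉ A := by
  classical
  set Af := hAf.toFinset with hAfdef
  set Bf := hBf.toFinset with hBfdef
  have hAfc : Af.card = A.ncard := (Set.ncard_eq_toFinset_card A hAf).symm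
  have hBfc : Bf.card = B.ncard := (Set.ncard_eq_toFinset_card B hBf).symm
  have hAsub : Af ⊆ Finset.range k := by
    intro a ha
    exact Finset.mem_range.mpr (hA a (hAf.mem_toFinset.mp ha))
  have hle : Bf.card ≤ (Finset.range k \ Af).card := by
    rw [Finset.card_sdiff_of_subset hAsub, Finset.card_range]; omega
  obtain ⟨C, hCsub, hCcard⟩ := Finset.exists_subset_card_eq hle
  have hCk : ∀ n ∈ C, n < k := by
    intro n hn
    have := hCsub hn
    rw [Finset.mem_sdiff, Finset.mem_range] at this
    exact this.1
  have hBk : ∀ n ∈ Bf, n < k := fun n hn => hB n (hBf.mem_toFinset.mp hn)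
  have e1 : {x : Fin k // (x : ℕ) ∈ Bf} ≃ {n : ℕ // n ∈ Bf} :=
    { toFun := fun x => ⟨x.1, x.2⟩
      invFun := fun n => ⟨⟨n.1, hBk n.1 n.2⟩, n.2⟩
      left_inv := fun x => rfl
      right_inv := fun n => rfl }
  have e2 : {x : Fin k // (x : ℕ) ∈ C} ≃ {n : ℕ // n ∈ C} :=
    { toFun := fun x => ⟨x.1, x.2⟩
      invFun := fun n => ⟨⟨n.1, hCk n.1 n.2⟩, n.2⟩
      left_inv := fun x => rfl
      right_inv := fun n => rfl }
  have hcards : Fintype.card {x : Fin k // (x : ℕ) ∈ Bf}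
      = Fintype.card {x : Fin k // (x : ℕ) ∈ C} := by
    rw [Fintype.card_congr e1, Fintype.card_congr e2, Fintype.card_coe, Fintype.card_coe, hCcard]
  let e := Fintype.equivOfCardEq hcards
  let π : Equiv.Perm (Fin k) := e.extendSubtype
  refine ⟨fun n => if hn : n < k then (π ⟨n, hn⟩ : ℕ) else n, ?_, ?_, ?_⟩
  · intro a b hab
    dsimp only at hab
    by_cases ha : a < k <;> by_cases hb : b < k
    · rw [dif_pos ha, dif_pos hb] at hab
      have := π.injective (Fin.val_injective hab)
      exact congrArg Fin.val this
    · rw [dif_pos ha, dif_neg hb] at hab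
      have : (π ⟨a, ha⟩ : ℕ) < k := (π ⟨a, ha⟩).2
      omega
    · rw [dif_neg ha, dif_pos hb] at hab
      have : (π ⟨b, hb⟩ : ℕ) < k := (π ⟨b, hb⟩).2
      omega
    · rwa [dif_neg ha, dif_neg hb] at hab
  · intro n hn
    dsimp only
    rw [dif_pos hn]
    exact (π ⟨n, hn⟩).2
  · intro b hb
    have hbk : b < k := hB b hb
    have hbBf : b ∈ Bf := hBf.mem_toFinset.mpr hb
    dsimp only
    rw [dif_pos hbk]
    have hmem : ((π ⟨b, hbk⟩ : Fin k) : ℕ) ∈ C := e.extendSubtype_mem ⟨b, hbk⟩ hbBf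
    have := hCsub hmem
    rw [Finset.mem_sdiff] at this
    intro hcontra
    exact this.2 (hAf.mem_toFinset.mpr hcontra)

lemma uniqueSet_finite {V : Type} [Fintype V] (G : SimpleGraph V) (c : V → ℕ) (v : V) :
    {a | colMult G c v a = 1}.Finite := by
  apply (Set.finite_range c).subset
  intro a ha
  have h0 : {u | G.Adj v u ∧ c u = a}.ncard = 1 := ha
  obtain ⟨u, hu⟩ := Set.nonempty_of_ncard_ne_zero (show {u | G.Adj v u ∧ c u = a}.ncard ≠ 0 by omega)
  exact ⟨u, hu.2⟩

lemma maxDeg_mono {V : Type} [Fintype V] {G H : SimpleGraph V} (hle : H ≤ G) :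
    maxDeg H ≤ maxDeg G := by
  unfold maxDeg
  by_cases hV : Nonempty V
  · apply csSup_le (Set.range_nonempty _)
    rintro x ⟨v, rfl⟩
    have h1 : deg H v ≤ deg G v :=
      Set.ncard_le_ncard (fun u hu => hle hu) (Set.toFinite _)
    exact h1.trans (le_csSup ((Set.finite_range _).bddAbove) ⟨v, rfl⟩)
  · rw [not_nonempty_iff] at hV
    rw [Set.range_eq_empty, Set.range_eq_empty]

lemma allUnique {V : Type} [Fintype V] (G' : SimpleGraph V) (c : V → ℕ) (h : ℕ) (v : V)
    (hcf : min (deg G' v) h ≤ {a | colMult G' c v a = 1}.ncard) (hlt : deg G' v < h) :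
    c '' (G'.neighborSet v) = {a | colMult G' c v a = 1} ∧
      {a | colMult G' c v a = 1}.ncard = deg G' v := by
  set S := {a | colMult G' c v a = 1} with hSdef
  have hS : deg G' v ≤ S.ncard := by
    rw [min_eq_left (le_of_lt hlt)] at hcf; exact hcf
  have hsub : S ⊆ c '' (G'.neighborSet v) := by
    intro a ha
    have h0 : {u | G'.Adj v u ∧ c u = a}.ncard = 1 := ha
    obtain ⟨u, hu⟩ := Set.nonempty_of_ncard_ne_zero
      (show {u | G'.Adj v u ∧ c u = a}.ncard ≠ 0 by omega)
    exact ⟨u, hu.1, hu.2⟩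
  have himg : (c '' (G'.neighborSet v)).ncard ≤ deg G' v :=
    Set.ncard_image_le (Set.toFinite _)
  have heq : S = c '' (G'.neighborSet v) :=
    Set.eq_of_subset_of_ncard_le hsub (by omega) ((Set.toFinite _).image c)
  refine ⟨heq.symm, ?_⟩
  have : S.ncard = (c '' (G'.neighborSet v)).ncard := by rw [heq]
  omega

lemma comap_transfer {V : Type} (G : SimpleGraph V) (Q : V → Prop)
    (hQ : ∀ u w, G.Adj u w → Q u → Q w) (c : V → ℕ) (c₁ : {u // Q u} → ℕ)
    (hc : ∀ u (hu : Q u), c u = c₁ ⟨u, hu⟩) (v : {u // Q u}) :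
    deg (G.comap (Subtype.val : {u // Q u} → V)) v = deg G v.1 ∧
    ∀ a, colMult (G.comap (Subtype.val : {u // Q u} → V)) c₁ v a = colMult G c v.1 a := by
  constructor
  · unfold deg
    rw [← Set.ncard_image_of_injective _ Subtype.val_injective]
    congr 1
    ext u
    simp only [Set.mem_image, mem_neighborSet, comap_adj]
    constructor
    · rintro ⟨w, hw, rfl⟩; exact hw
    · intro hu; exact ⟨⟨u, hQ _ _ hu v.2⟩, hu, rfl⟩
  · intro a
    unfold colMult
    rw [← Set.ncard_image_of_injective _ Subtype.val_injective]
    congr 1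
    ext u
    simp only [Set.mem_image, Set.mem_setOf_eq, comap_adj]
    constructor
    · rintro ⟨w, ⟨hw, hcw⟩, rfl⟩; exact ⟨hw, by rw [hc w.1 w.2]; exact hcw⟩
    · rintro ⟨hu, hcu⟩
      refine ⟨⟨u, hQ _ _ hu v.2⟩, ⟨hu, ?_⟩, rfl⟩
      rw [← hc]; exact hcu

lemma disc_case {V : Type} [Fintype V] (G : SimpleGraph V) (h k : ℕ) (P : V → Prop)
    (hP : ∀ u w, G.Adj u w → (P u ↔ P w)) (a b : V) (ha : P a) (hb : ¬ P b)
    (hcex : ¬ ∃ c, IsHCFCol G h k c)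
    (hmin : ∀ (W : Type) [Fintype W] (H : SimpleGraph W),
      Fintype.card W + H.edgeSet.ncard < Fintype.card V + G.edgeSet.ncard →
      maxDeg H ≤ maxDeg G → ∃ c, IsHCFCol H h k c) : False := by
  classical
  have side : ∀ (Q : V → Prop) (hQ : ∀ u w, G.Adj u w → Q u → Q w) (x : V), ¬ Q x →
      ∃ c₁ : {u // Q u} → ℕ, IsHCFCol (G.comap (Subtype.val : {u // Q u} → V)) h k c₁ := by
    intro Q hQ x hx
    apply hmin
    · have h1 : Fintype.card {u // Q u} < Fintype.card V := Fintype.card_subtype_lt hx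
      have h2 : (G.comap (Subtype.val : {u // Q u} → V)).edgeSet.ncard ≤ G.edgeSet.ncard := by
        apply Set.ncard_le_ncard_of_injOn (Sym2.map Subtype.val)
        · intro e he
          induction e using Sym2.ind with
          | h x y => simpa using he
        · exact (Sym2.map.injective Subtype.val_injective).injOn
      omega
    · unfold maxDeg
      by_cases hW : Nonempty {u // Q u}
      · apply csSup_le (Set.range_nonempty _)
        rintro x ⟨v, rfl⟩
        dsimp only
        rw [(comap_transfer G Q hQ (fun _ => 0) (fun _ => 0) (fun _ _ => rfl) v).1]
        exact le_csSup ((Set.finite_range _).bddAbove) ⟨v.1, rfl⟩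
      · rw [not_nonempty_iff] at hW
        rw [Set.range_eq_empty]
        simp
  obtain ⟨c₁, ⟨hk1, hp1⟩, hf1⟩ := side P (fun u w huw hu => (hP u w huw).mp hu) b hb
  obtain ⟨c₂, ⟨hk2, hp2⟩, hf2⟩ := side (fun u => ¬ P u)
    (fun u w huw hu hw => hu ((hP u w huw).mpr hw)) a (fun hh => hh ha)
  let c : V → ℕ := fun u => if hu : P u then c₁ ⟨u, hu⟩ else c₂ ⟨u, hu⟩
  have hc1 : ∀ u (hu : P u), c u = c₁ ⟨u, hu⟩ := fun u hu => dif_pos hu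
  have hc2 : ∀ u (hu : ¬ P u), c u = c₂ ⟨u, hu⟩ := fun u hu => dif_neg hu
  apply hcex
  refine ⟨c, ⟨fun v => ?_, fun u w huw => ?_⟩, fun v => ?_⟩
  · by_cases hv : P v
    · rw [hc1 v hv]; exact hk1 _
    · rw [hc2 v hv]; exact hk2 _
  · by_cases hu : P u
    · have hw : P w := (hP u w huw).mp hu
      rw [hc1 u hu, hc1 w hw]; exact hp1 ⟨u, hu⟩ ⟨w, hw⟩ huw
    · have hw : ¬ P w := fun hw => hu ((hP u w huw).mpr hw)
      rw [hc2 u hu, hc2 w hw]; exact hp2 ⟨u, hu⟩ ⟨w, hw⟩ huw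
  · by_cases hv : P v
    · obtain ⟨hd, hm⟩ := comap_transfer G P (fun u w huw hu => (hP u w huw).mp hu) c c₁ hc1 ⟨v, hv⟩
      have := hf1 ⟨v, hv⟩
      rw [hd] at this
      have hS : {x | colMult (G.comap (Subtype.val : {u // P u} → V)) c₁ ⟨v, hv⟩ x = 1}
          = {x | colMult G c v x = 1} := by
        ext x; simp only [Set.mem_setOf_eq]; rw [hm x]
      rw [hS] at this; exact this
    · obtain ⟨hd, hm⟩ := comap_transfer G (fun u => ¬ P u)
        (fun u w huw hu hw => hu ((hP u w huw).mpr hw)) c c₂ hc2 ⟨v, hv⟩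
      have := hf2 ⟨v, hv⟩
      rw [hd] at this
      have hS : {x | colMult (G.comap (Subtype.val : {u // ¬ P u} → V)) c₂ ⟨v, hv⟩ x = 1}
          = {x | colMult G c v x = 1} := by
        ext x; simp only [Set.mem_setOf_eq]; rw [hm x]
      rw [hS] at this; exact this

end Helpers

/-- a minimal counterexample to the main theorem has no cut-edge. -/
theorem stmt_7 {V : Type} [Fintype V] (G : SimpleGraph V) (h : ℕ) (h1 : 1 ≤ h)
    (hD : h + 2 ≤ maxDeg G)
    (hcex : ¬ ∃ c, IsHCFCol G h ((h + 1) * maxDeg G - 1) c)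
    (hmin : ∀ (W : Type) [Fintype W] (H : SimpleGraph W),
      Fintype.card W + H.edgeSet.ncard < Fintype.card V + G.edgeSet.ncard →
      maxDeg H ≤ maxDeg G → ∃ c, IsHCFCol H h ((h + 1) * maxDeg G - 1) c) :
    ∀ e, ¬ G.IsBridge e := by
  classical
  intro e
  induction e using Sym2.inductionOn with
  | _ v₁ v₂ =>
  intro hbr
  rw [SimpleGraph.isBridge_iff] at hbr
  by_cases hadj : G.Adj v₁ v₂
  swap
  · have hdel : G.deleteEdges {s(v₁, v₂)} = G := by
      ext u w
      rw [SimpleGraph.deleteEdges_adj]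
      constructor
      · exact fun hh => hh.1
      · intro huw
        refine ⟨huw, ?_⟩
        intro hmem
        rw [Set.mem_singleton_iff, Sym2.eq_iff] at hmem
        rcases hmem with ⟨rfl, rfl⟩ | ⟨rfl, rfl⟩
        · exact hadj huw
        · exact hadj huw.symm
    rw [hdel] at hbr
    exact disc_case G h _ (G.Reachable v₂)
      (fun u w huw => ⟨fun hr => hr.trans huw.reachable, fun hr => hr.trans huw.symm.reachable⟩)
      v₂ v₁ (SimpleGraph.Reachable.refl v₂) (fun hr => hbr hr.symm) hcex hmin
  have hnr := hbr
  set G' : SimpleGraph V := G \ SimpleGraph.fromEdgeSet {s(v₁, v₂)} with hG'def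
  have hG'del : G' = G.deleteEdges {s(v₁, v₂)} := rfl
  have hG'adj : ∀ u w, G'.Adj u w ↔ G.Adj u w ∧ ¬(u = v₁ ∧ w = v₂) ∧ ¬(u = v₂ ∧ w = v₁) := by
    intro u w
    rw [hG'del, SimpleGraph.deleteEdges_adj]
    simp only [Set.mem_singleton_iff, Sym2.eq_iff]
    tauto
  have hne : v₁ ≠ v₂ := hadj.ne
  have hecard : G'.edgeSet.ncard < G.edgeSet.ncard := by
    have hE : G'.edgeSet = G.edgeSet \ {s(v₁, v₂)} := by
      rw [hG'del, SimpleGraph.edgeSet_deleteEdges]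
    rw [hE]
    exact Set.ncard_diff_singleton_lt_of_mem (G.mem_edgeSet.mpr hadj) (Set.toFinite _)
  obtain ⟨c, hcpc, hcf⟩ := hmin V G' (by omega) (maxDeg_mono sdiff_le)
  obtain ⟨hck, hcprop⟩ := hcpc
  set k := (h + 1) * maxDeg G - 1 with hkdef
  have hk2 : 2 * (h + 1) ≤ k := by
    have h2 : (h + 1) * (h + 2) ≤ (h + 1) * maxDeg G := Nat.mul_le_mul_left _ hD
    have h3 : (h + 1) * (h + 2) = h * h + 3 * h + 2 := by ring
    have h4 : 1 ≤ h * h := Nat.one_le_iff_ne_zero.mpr (Nat.mul_ne_zero (by omega) (by omega))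
    omega
  -- sides of the bridge
  set R : V → Prop := fun u => G'.Reachable v₂ u with hRdef
  have hRv₂ : R v₂ := SimpleGraph.Reachable.refl v₂
  have hRv₁ : ¬ R v₁ := fun hr => hnr hr.symm
  have hside : ∀ u w, G'.Adj u w → (R u ↔ R w) :=
    fun u w huw => ⟨fun hr => hr.trans huw.reachable, fun hr => hr.trans huw.symm.reachable⟩
  have hnadj : ∀ v, v ≠ v₁ → v ≠ v₂ → ∀ u, G.Adj v u ↔ G'.Adj v u := by
    intro v hv1 hv2 u
    rw [hG'adj]
    exact ⟨fun hu => ⟨hu, by tauto, by tauto⟩, fun hu => hu.1⟩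
  have hnadj1 : ∀ u, G.Adj v₁ u ↔ (G'.Adj v₁ u ∨ u = v₂) := by
    intro u
    rw [hG'adj]
    constructor
    · intro hu
      by_cases h2 : u = v₂
      · exact Or.inr h2
      · exact Or.inl ⟨hu, by tauto, by tauto⟩
    · rintro (⟨hu, -, -⟩ | rfl)
      · exact hu
      · exact hadj
  have hnadj2 : ∀ u, G.Adj v₂ u ↔ (G'.Adj v₂ u ∨ u = v₁) := by
    intro u
    rw [hG'adj]
    constructor
    · intro hu
      by_cases h2 : u = v₁
      · exact Or.inr h2
      · exact Or.inl ⟨hu, by tauto, by tauto⟩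
    · rintro (⟨hu, -, -⟩ | rfl)
      · exact hu
      · exact hadj.symm
  have hnG'12 : ¬ G'.Adj v₁ v₂ := by rw [hG'adj]; tauto
  have hnG'21 : ¬ G'.Adj v₂ v₁ := fun hu => hnG'12 hu.symm
  have hnRN1 : ∀ u, G'.Adj v₁ u → ¬ R u := fun u hu hr => hRv₁ (hr.trans hu.symm.reachable)
  have hRN2 : ∀ u, G'.Adj v₂ u → R u := fun u hu => hu.reachable
  -- degrees
  have hdeg : ∀ v, v ≠ v₁ → v ≠ v₂ → deg G v = deg G' v := by
    intro v hv1 hv2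
    unfold deg
    congr 1
    ext u
    simp only [SimpleGraph.mem_neighborSet]
    exact hnadj v hv1 hv2 u
  have hN1 : G.neighborSet v₁ = insert v₂ (G'.neighborSet v₁) := by
    ext u
    simp only [SimpleGraph.mem_neighborSet, Set.mem_insert_iff]
    rw [hnadj1 u]; tauto
  have hN2 : G.neighborSet v₂ = insert v₁ (G'.neighborSet v₂) := by
    ext u
    simp only [SimpleGraph.mem_neighborSet, Set.mem_insert_iff]
    rw [hnadj2 u]; tauto
  have hdeg1 : deg G v₁ = deg G' v₁ + 1 := by
    unfold deg
    have hnm : v₂ ∉ G'.neighborSet v₁ := fun hm => hnG'12 hm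
    rw [hN1, Set.ncard_insert_of_notMem hnm (Set.toFinite _)]
  have hdeg2 : deg G v₂ = deg G' v₂ + 1 := by
    unfold deg
    have hnm : v₁ ∉ G'.neighborSet v₂ := fun hm => hnG'21 hm
    rw [hN2, Set.ncard_insert_of_notMem hnm (Set.toFinite _)]
  -- unique color sets and the sets A, B
  set S₁ := {a | colMult G' c v₁ a = 1} with hS₁def
  set S₂ := {a | colMult G' c v₂ a = 1} with hS₂def
  have hS₁fin : S₁.Finite := uniqueSet_finite G' c v₁
  have hS₂fin : S₂.Finite := uniqueSet_finite G' c v₂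
  obtain ⟨U₁, hU₁sub, hU₁card⟩ := Set.exists_subset_card_eq (min_le_left S₁.ncard h)
  obtain ⟨U₂, hU₂sub, hU₂card⟩ := Set.exists_subset_card_eq (min_le_left S₂.ncard h)
  have hU₁fin : U₁.Finite := hS₁fin.subset hU₁sub
  have hU₂fin : U₂.Finite := hS₂fin.subset hU₂sub
  have hSlt : ∀ v a, colMult G' c v a = 1 → a < k := by
    intro v a ha
    have h0 : {u | G'.Adj v u ∧ c u = a}.ncard = 1 := ha
    obtain ⟨u, hu⟩ := Set.nonempty_of_ncard_ne_zero
      (show {u | G'.Adj v u ∧ c u = a}.ncard ≠ 0 by omega)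
    rw [← hu.2]
    exact hck u
  set A := insert (c v₁) U₁ with hAdef
  set B := insert (c v₂) U₂ with hBdef
  have hAfin : A.Finite := hU₁fin.insert _
  have hBfin : B.Finite := hU₂fin.insert _
  have hAlt : ∀ a ∈ A, a < k := by
    intro a ha
    rcases Set.mem_insert_iff.mp ha with rfl | ha
    · exact hck v₁
    · exact hSlt v₁ a (hU₁sub ha)
  have hBlt : ∀ a ∈ B, a < k := by
    intro a ha
    rcases Set.mem_insert_iff.mp ha with rfl | ha
    · exact hck v₂
    · exact hSlt v₂ a (hU₂sub ha)
  have hAcard : A.ncard ≤ h + 1 := by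
    rw [hAdef]
    have h2 := Set.ncard_insert_le (c v₁) U₁
    have h3 : U₁.ncard ≤ h := by rw [hU₁card]; exact min_le_right _ _
    omega
  have hBcard : B.ncard ≤ h + 1 := by
    rw [hBdef]
    have h2 := Set.ncard_insert_le (c v₂) U₂
    have h3 : U₂.ncard ≤ h := by rw [hU₂card]; exact min_le_right _ _
    omega
  obtain ⟨σ, hσinj, hσlt, hσB⟩ := exists_sigma k A B hAlt hBlt hAfin hBfin (by omega)
  set c' : V → ℕ := fun u => if R u then σ (c u) else c u with hc'def
  have hc'R : ∀ u, R u → c' u = σ (c u) := fun u hu => if_pos hu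
  have hc'nR : ∀ u, ¬ R u → c' u = c u := fun u hu => if_neg hu
  have hc'v₁ : c' v₁ = c v₁ := hc'nR v₁ hRv₁
  have hc'v₂ : c' v₂ = σ (c v₂) := hc'R v₂ hRv₂
  have hσcv₂A : σ (c v₂) ∉ A := hσB _ (Set.mem_insert _ _)
  have hcv₁A : c v₁ ∈ A := Set.mem_insert _ _
  have hσU₂A : ∀ b ∈ U₂, σ b ∉ A := fun b hb => hσB b (Set.mem_insert_of_mem _ hb)
  -- set identities for colMult
  have L1 : ∀ v, ¬ R v → v ≠ v₁ → ∀ a,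
      {u | G.Adj v u ∧ c' u = a} = {u | G'.Adj v u ∧ c u = a} := by
    intro v hv hv1 a
    have hv2 : v ≠ v₂ := by rintro rfl; exact hv hRv₂
    ext u
    simp only [Set.mem_setOf_eq]
    rw [hnadj v hv1 hv2 u]
    constructor
    · rintro ⟨hu, hcu⟩
      have hnRu : ¬ R u := fun hr => hv ((hside v u hu).mpr hr)
      rw [hc'nR u hnRu] at hcu
      exact ⟨hu, hcu⟩
    · rintro ⟨hu, hcu⟩
      have hnRu : ¬ R u := fun hr => hv ((hside v u hu).mpr hr)
      rw [hc'nR u hnRu]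
      exact ⟨hu, hcu⟩
  have L2 : ∀ v, R v → v ≠ v₂ → ∀ b,
      {u | G.Adj v u ∧ c' u = σ b} = {u | G'.Adj v u ∧ c u = b} := by
    intro v hv hv2 b
    have hv1 : v ≠ v₁ := fun hh => hRv₁ (by rw [← hh]; exact hv)
    ext u
    simp only [Set.mem_setOf_eq]
    rw [hnadj v hv1 hv2 u]
    constructor
    · rintro ⟨hu, hcu⟩
      have hRu : R u := (hside v u hu).mp hv
      rw [hc'R u hRu] at hcu
      exact ⟨hu, hσinj hcu⟩
    · rintro ⟨hu, hcu⟩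
      have hRu : R u := (hside v u hu).mp hv
      rw [hc'R u hRu, hcu]
      exact ⟨hu, rfl⟩
  have L3 : ∀ a, a ≠ σ (c v₂) →
      {u | G.Adj v₁ u ∧ c' u = a} = {u | G'.Adj v₁ u ∧ c u = a} := by
    intro a hane
    ext u
    simp only [Set.mem_setOf_eq]
    rw [hnadj1 u]
    constructor
    · rintro ⟨hu | rfl, hcu⟩
      · rw [hc'nR u (hnRN1 u hu)] at hcu
        exact ⟨hu, hcu⟩
      · rw [hc'v₂] at hcu
        exact absurd hcu.symm hane
    · rintro ⟨hu, hcu⟩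
      rw [← hc'nR u (hnRN1 u hu)] at hcu
      exact ⟨Or.inl hu, hcu⟩
  have L3' : (∀ u, G'.Adj v₁ u → c u ≠ σ (c v₂)) →
      {u | G.Adj v₁ u ∧ c' u = σ (c v₂)} = {v₂} := by
    intro hforall
    ext u
    simp only [Set.mem_setOf_eq, Set.mem_singleton_iff]
    rw [hnadj1 u]
    constructor
    · rintro ⟨hu | rfl, hcu⟩
      · rw [hc'nR u (hnRN1 u hu)] at hcu
        exact absurd hcu (hforall u hu)
      · rfl
    · rintro rfl
      exact ⟨Or.inr rfl, hc'v₂⟩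
  have L4 : ∀ b, σ b ≠ c v₁ →
      {u | G.Adj v₂ u ∧ c' u = σ b} = {u | G'.Adj v₂ u ∧ c u = b} := by
    intro b hbne
    ext u
    simp only [Set.mem_setOf_eq]
    rw [hnadj2 u]
    constructor
    · rintro ⟨hu | rfl, hcu⟩
      · rw [hc'R u (hRN2 u hu)] at hcu
        exact ⟨hu, hσinj hcu⟩
      · rw [hc'v₁] at hcu
        exact absurd hcu.symm hbne
    · rintro ⟨hu, hcu⟩
      refine ⟨Or.inl hu, ?_⟩
      rw [hc'R u (hRN2 u hu), hcu]
  have L4' : (∀ u, G'.Adj v₂ u → σ (c u) ≠ c v₁) →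
      {u | G.Adj v₂ u ∧ c' u = c v₁} = {v₁} := by
    intro hforall
    ext u
    simp only [Set.mem_setOf_eq, Set.mem_singleton_iff]
    rw [hnadj2 u]
    constructor
    · rintro ⟨hu | rfl, hcu⟩
      · rw [hc'R u (hRN2 u hu)] at hcu
        exact absurd hcu (hforall u hu)
      · rfl
    · rintro rfl
      exact ⟨Or.inr rfl, hc'v₁⟩
  -- properness
  have hprop' : IsProperCol G k c' := by
    constructor
    · intro v
      by_cases hv : R v
      · rw [hc'R v hv]; exact hσlt _ (hck v)
      · rw [hc'nR v hv]; exact hck v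
    · intro u w huw
      by_cases hcase : ¬(u = v₁ ∧ w = v₂) ∧ ¬(u = v₂ ∧ w = v₁)
      · have hG'uw : G'.Adj u w := (hG'adj u w).mpr ⟨huw, hcase.1, hcase.2⟩
        by_cases hu : R u
        · have hw : R w := (hside u w hG'uw).mp hu
          rw [hc'R u hu, hc'R w hw]
          exact fun hh => hcprop u w hG'uw (hσinj hh)
        · have hw : ¬ R w := fun hr => hu ((hside u w hG'uw).mpr hr)
          rw [hc'nR u hu, hc'nR w hw]
          exact hcprop u w hG'uw
      · rw [not_and_or, not_not, not_not] at hcase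
        rcases hcase with ⟨rfl, rfl⟩ | ⟨rfl, rfl⟩
        · rw [hc'v₁, hc'v₂]
          exact fun hh => hσcv₂A (by rw [← hh]; exact hcv₁A)
        · rw [hc'v₂, hc'v₁]
          exact fun hh => hσcv₂A (by rw [hh]; exact hcv₁A)
  -- the h-conflict-free condition
  have hhcf' : ∀ v, min (deg G v) h ≤ {a | colMult G c' v a = 1}.ncard := by
    intro v
    by_cases hv1 : v = v₁
    · rw [hv1]
      have hU₁T : U₁ ⊆ {a | colMult G c' v₁ a = 1} := by
        intro a ha
        have haS : colMult G' c v₁ a = 1 := hU₁sub ha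
        have hane : a ≠ σ (c v₂) := by
          intro hh
          exact hσcv₂A (by rw [← hh]; exact Set.mem_insert_of_mem _ ha)
        simp only [Set.mem_setOf_eq]
        unfold colMult
        rw [L3 a hane]
        exact haS
      have hTfin := uniqueSet_finite G c' v₁
      have hTle := Set.ncard_le_ncard hU₁T hTfin
      by_cases hcase : h ≤ deg G' v₁
      · have h5 : h ≤ S₁.ncard := by
          have h6 := hcf v₁
          rw [min_eq_right hcase] at h6
          exact h6
        have h7 : U₁.ncard = h := by rw [hU₁card, min_eq_right h5]
        have h8 := min_le_right (deg G v₁) h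
        omega
      · push_neg at hcase
        obtain ⟨hPeq, hScard⟩ := allUnique G' c h v₁ (hcf v₁) hcase
        have hScard' : S₁.ncard = deg G' v₁ := by rw [hS₁def]; exact hScard
        have h9 : U₁.ncard = S₁.ncard := by
          rw [hU₁card, min_eq_left (show S₁.ncard ≤ h by omega)]
        have hU₁eq : U₁ = S₁ := Set.eq_of_subset_of_ncard_le hU₁sub (le_of_eq h9.symm) hS₁fin
        have hforall : ∀ u, G'.Adj v₁ u → c u ≠ σ (c v₂) := by
          intro u hu hcontra
          have hmem : c u ∈ S₁ := by rw [hS₁def, ← hPeq]; exact ⟨u, hu, rfl⟩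
          have hmem2 : c u ∈ U₁ := by rw [hU₁eq]; exact hmem
          exact hσcv₂A (by rw [← hcontra]; exact Set.mem_insert_of_mem _ hmem2)
        have hσT : σ (c v₂) ∈ {a | colMult G c' v₁ a = 1} := by
          simp only [Set.mem_setOf_eq]
          unfold colMult
          rw [L3' hforall]
          exact Set.ncard_singleton v₂
        have hσU₁ : σ (c v₂) ∉ U₁ := fun hmem => hσcv₂A (Set.mem_insert_of_mem _ hmem)
        have hsub2 : insert (σ (c v₂)) U₁ ⊆ {a | colMult G c' v₁ a = 1} :=
          Set.insert_subset hσT hU₁T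
        have hcard2 : (insert (σ (c v₂)) U₁).ncard = deg G' v₁ + 1 := by
          rw [Set.ncard_insert_of_notMem hσU₁ hU₁fin]
          omega
        have h10 := Set.ncard_le_ncard hsub2 hTfin
        have h11 := min_le_left (deg G v₁) h
        omega
    · by_cases hv2 : v = v₂
      · rw [hv2]
        have hσU₂T : σ '' U₂ ⊆ {a | colMult G c' v₂ a = 1} := by
          rintro a ⟨b, hb, rfl⟩
          have hbS : colMult G' c v₂ b = 1 := hU₂sub hb
          have hbne : σ b ≠ c v₁ := fun hh => hσU₂A b hb (by rw [hh]; exact hcv₁A)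
          simp only [Set.mem_setOf_eq]
          unfold colMult
          rw [L4 b hbne]
          exact hbS
        have hTfin := uniqueSet_finite G c' v₂
        have hTle := Set.ncard_le_ncard hσU₂T hTfin
        have himgcard : (σ '' U₂).ncard = U₂.ncard := Set.ncard_image_of_injective U₂ hσinj
        by_cases hcase : h ≤ deg G' v₂
        · have h5 : h ≤ S₂.ncard := by
            have h6 := hcf v₂
            rw [min_eq_right hcase] at h6
            exact h6
          have h7 : U₂.ncard = h := by rw [hU₂card, min_eq_right h5]
          have h8 := min_le_right (deg G v₂) h
          omega
        · push_neg at hcase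
          obtain ⟨hPeq, hScard⟩ := allUnique G' c h v₂ (hcf v₂) hcase
          have hScard' : S₂.ncard = deg G' v₂ := by rw [hS₂def]; exact hScard
          have h9 : U₂.ncard = S₂.ncard := by
            rw [hU₂card, min_eq_left (show S₂.ncard ≤ h by omega)]
          have hU₂eq : U₂ = S₂ := Set.eq_of_subset_of_ncard_le hU₂sub (le_of_eq h9.symm) hS₂fin
          have hforall : ∀ u, G'.Adj v₂ u → σ (c u) ≠ c v₁ := by
            intro u hu hcontra
            have hmem : c u ∈ S₂ := by rw [hS₂def, ← hPeq]; exact ⟨u, hu, rfl⟩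
            have hmem2 : c u ∈ U₂ := by rw [hU₂eq]; exact hmem
            exact hσU₂A _ hmem2 (by rw [hcontra]; exact hcv₁A)
          have hcv₁T : c v₁ ∈ {a | colMult G c' v₂ a = 1} := by
            simp only [Set.mem_setOf_eq]
            unfold colMult
            rw [L4' hforall]
            exact Set.ncard_singleton v₁
          have hcv₁img : c v₁ ∉ σ '' U₂ := by
            rintro ⟨b, hb, hh⟩
            exact hσU₂A b hb (by rw [hh]; exact hcv₁A)
          have hsub2 : insert (c v₁) (σ '' U₂) ⊆ {a | colMult G c' v₂ a = 1} :=
            Set.insert_subset hcv₁T hσU₂T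
          have hcard2 : (insert (c v₁) (σ '' U₂)).ncard = deg G' v₂ + 1 := by
            rw [Set.ncard_insert_of_notMem hcv₁img (hU₂fin.image σ)]
            omega
          have h10 := Set.ncard_le_ncard hsub2 hTfin
          have h11 := min_le_left (deg G v₂) h
          omega
      · by_cases hR : R v
        · have hsub : σ '' {a | colMult G' c v a = 1} ⊆ {a | colMult G c' v a = 1} := by
            rintro a ⟨b, hb, rfl⟩
            simp only [Set.mem_setOf_eq] at hb ⊢
            unfold colMult
            rw [L2 v hR hv2 b]
            exact hb
          have h5 := Set.ncard_le_ncard hsub (uniqueSet_finite G c' v)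
          rw [Set.ncard_image_of_injective _ hσinj] at h5
          rw [hdeg v hv1 hv2]
          exact le_trans (hcf v) h5
        · have hTeq : {a | colMult G c' v a = 1} = {a | colMult G' c v a = 1} := by
            ext a
            simp only [Set.mem_setOf_eq]
            unfold colMult
            rw [L1 v hR hv1 a]
          rw [hTeq, hdeg v hv1 hv2]
          exact hcf v
  exact hcex ⟨c', hprop', hhcf'⟩
end

section
/- Every 2-edge-connected graph G with a shortest cycle C has an ordering v₁, ..., v_n of its vertices such that: (i) each v_i with i < n has a neighbor among v_{i+1}, ..., v_n; (ii) each v_i with 2 ≤ i ≤ n−1 has at least two neighbors among v_{i−1}, ..., v_n; and (iii) there exists ℓ ≤ n−2 such that v_ℓ, ..., v_n are exactly the vertices of C, and v_n is any prescribed vertex of C. -/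
open SimpleGraph

variable {V : Type*}

namespace Stmt9Aux

variable {V : Type*}

/-- The key local condition on a list ordering. -/
def GoodL (G : SimpleGraph V) (d : V) (T : List V) : Prop :=
  ∀ i, i + 2 ≤ T.length → ∃ j k, j < T.length ∧ k < T.length ∧ j ≠ k ∧ j ≠ i ∧ k ≠ i ∧
    i ≤ j + 1 ∧ i ≤ k + 1 ∧
    G.Adj (T.getD i d) (T.getD j d) ∧ G.Adj (T.getD i d) (T.getD k d)

lemma firstHit {G : SimpleGraph V} {T : List V} {a b : V} (q : G.Walk a b) (hb : b ∈ T)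
    (e : Sym2 V) (he : e ∉ q.edges) :
    ∃ c, c ∈ T ∧ ∃ r : G.Walk a c, r.IsPath ∧ (∀ y ∈ r.support.dropLast, y ∉ T) ∧
      e ∉ r.edges := by
  classical
  induction q with
  | nil => exact ⟨_, hb, SimpleGraph.Walk.nil, SimpleGraph.Walk.IsPath.nil, by simp, by simp⟩
  | @cons u d' b h q' ih =>
    by_cases hu : u ∈ T
    · exact ⟨u, hu, SimpleGraph.Walk.nil, SimpleGraph.Walk.IsPath.nil, by simp, by simp⟩
    · obtain ⟨c, hc, r', hr'p, hr'd, hr'e⟩ := ih hb (by simp at he; exact he.2)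
      refine ⟨c, hc, (SimpleGraph.Walk.cons h r').bypass, SimpleGraph.Walk.bypass_isPath _,
        ?_, fun hmem => by
          have h2 := SimpleGraph.Walk.edges_bypass_subset _ hmem
          rw [SimpleGraph.Walk.edges_cons] at h2
          rcases List.mem_cons.1 h2 with h1 | h1
          · exact he (by rw [SimpleGraph.Walk.edges_cons]; exact h1 ▸ List.mem_cons_self)
          · exact hr'e h1⟩
      intro y hy
      have hpath : ((SimpleGraph.Walk.cons h r').bypass).IsPath :=
        SimpleGraph.Walk.bypass_isPath _
      have hsupnd := hpath.support_nodup
      have hlast : ((SimpleGraph.Walk.cons h r').bypass).support.getLast (by simp) = c :=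
        SimpleGraph.Walk.getLast_support _
      have hsplit := List.dropLast_append_getLast
        (l := ((SimpleGraph.Walk.cons h r').bypass).support) (by simp)
      rw [hlast] at hsplit
      have hyne : y ≠ c := by
        intro h'; subst h'
        rw [← hsplit, List.nodup_append] at hsupnd
        exact hsupnd.2.2 y hy y (by simp) rfl
      have hmem : y ∈ ((SimpleGraph.Walk.cons h r').bypass).support :=
        List.dropLast_subset _ hy
      have hmem2 := SimpleGraph.Walk.support_bypass_subset _ hmem
      rw [SimpleGraph.Walk.support_cons] at hmem2
      rcases List.mem_cons.1 hmem2 with h1 | h1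
      · exact h1 ▸ hu
      · have hlast' : r'.support.getLast (by simp) = c := SimpleGraph.Walk.getLast_support _
        have hsplit' := List.dropLast_append_getLast (l := r'.support) (by simp)
        rw [hlast'] at hsplit'
        rw [← hsplit', List.mem_append] at h1
        rcases h1 with h1 | h1
        · exact hr'd y h1
        · simp at h1; exact absurd h1 hyne


lemma boundaryEdge {G : SimpleGraph V} {T : List V} {a b : V} (p : G.Walk a b)
    (ha : a ∉ T) (hb : b ∈ T) : ∃ u1 u0, u1 ∉ T ∧ u0 ∈ T ∧ G.Adj u1 u0 := by
  induction p with
  | nil => exact absurd hb ha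
  | @cons u d' b h q' ih =>
    by_cases hd : d' ∈ T
    · exact ⟨u, d', ha, hd, h⟩
    · exact ih hd hb

lemma earStep {G : SimpleGraph V} (hconn : G.Connected)
    (hbridge : ∀ e, ¬ G.IsBridge e) {T : List V} (hT : T ≠ []) {v : V} (hv : v ∉ T) :
    ∃ (A : List V) (t u0 : V), A ≠ [] ∧ (∀ a ∈ A, a ∉ T) ∧ A.Nodup ∧
      t ∈ T ∧ u0 ∈ T ∧ List.Chain' G.Adj (A ++ [t]) ∧
      (∀ hh : A ≠ [], G.Adj (A.head hh) u0) ∧ (A.length = 1 → u0 ≠ t) := by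
  classical
  have ht0 : T.head hT ∈ T := List.head_mem hT
  obtain ⟨p⟩ := hconn.preconnected v (T.head hT)
  obtain ⟨u1, u0, hu1, hu0, hadj⟩ := boundaryEdge p hv ht0
  have hnb := hbridge s(u1, u0)
  rw [SimpleGraph.isBridge_iff] at hnb
  push_neg at hnb
  obtain ⟨q, hq⟩ := SimpleGraph.reachable_delete_edges_iff_exists_walk.1 hnb
  obtain ⟨c, hc, r, hrp, hrd, hre⟩ := firstHit q hu0 _ hq
  have hne : u1 ≠ c := fun h => hu1 (h ▸ hc)
  have hlen : 0 < r.length := by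
    by_contra h
    push_neg at h
    exact hne (r.eq_of_length_eq_zero (Nat.le_zero.1 h))
  have hsplit : r.support.dropLast ++ [c] = r.support := by
    have h0 := List.dropLast_append_getLast (l := r.support) (by simp)
    simpa using h0
  have hAne : r.support.dropLast ≠ [] := by
    intro h
    have := hsplit
    rw [h] at this
    have h2 : r.support.length = r.length + 1 := SimpleGraph.Walk.length_support _
    rw [← this] at h2
    simp only [List.nil_append, List.length_singleton] at h2
    omega
  refine ⟨r.support.dropLast, c, u0, hAne, hrd, ?_, hc, hu0, ?_, ?_, ?_⟩
  · exact (hrp.support_nodup).sublist (List.dropLast_sublist _)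
  · rw [hsplit]; exact r.isChain_adj_support
  · intro hh
    have hhead : r.support.dropLast.head hh = u1 := by
      have h1 : (r.support.dropLast ++ [c]).head (by simp) = u1 := by
        rw [List.head_eq_iff_head?_eq_some] at *
        rw [hsplit]
        have h1 : r.support.head (by simp) = u1 := SimpleGraph.Walk.head_support _
        rw [List.head_eq_iff_head?_eq_some] at h1
        exact h1
      rwa [List.head_append_of_ne_nil] at h1
    rw [hhead]; exact hadj
  · intro hl1 heq
    have hlr : r.length = 1 := by
      have h2 : r.support.length = r.length + 1 := SimpleGraph.Walk.length_support _
      have h3 : r.support.dropLast.length = r.support.length - 1 := List.length_dropLast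
      omega
    cases r with
    | nil => simp at hlr
    | @cons _ mid _ h' r' =>
      have hl0 : r'.length = 0 := by
        simp only [SimpleGraph.Walk.length_cons] at hlr; omega
      have hmid : mid = c := r'.eq_of_length_eq_zero hl0
      apply hre
      rw [SimpleGraph.Walk.edges_cons]
      subst hmid
      rw [heq]
      exact List.mem_cons_self


lemma chain'_getD {α : Type*} {R : α → α → Prop} {l : List α} (h : List.Chain' R l) (d : α)
    (i : ℕ) (hi : i + 1 < l.length) : R (l.getD i d) (l.getD (i + 1) d) := by
  have h2 := List.isChain_iff_getElem.1 h i (by omega)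
  rw [List.getD_eq_getElem _ _ (by omega), List.getD_eq_getElem _ _ (by omega)]
  simpa using h2

lemma goodPrepend {G : SimpleGraph V} {d : V} {T A : List V} {t u0 : V}
    (hG : GoodL G d T) (hT3 : 3 ≤ T.length) (hTnd : T.Nodup) (hA : A ≠ []) (hAnd : A.Nodup)
    (hAT : ∀ a ∈ A, a ∉ T) (ht : t ∈ T) (hu0 : u0 ∈ T)
    (hch : List.Chain' G.Adj (A ++ [t])) (hadj : ∀ hh : A ≠ [], G.Adj (A.head hh) u0)
    (h1 : A.length = 1 → u0 ≠ t) :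
    GoodL G d (A ++ T) := by
  classical
  set m := A.length with hm
  set L := T.length with hL
  have hm1 : 1 ≤ m := by
    rcases A with _ | ⟨a, A'⟩
    · exact absurd rfl hA
    · simp [hm]
  have hlen : (A ++ T).length = m + L := by simp [hm, hL]
  -- getD facts
  have hfa : ∀ i, i < m → (A ++ T).getD i d = A.getD i d := by
    intro i hi
    rw [List.getD_eq_getElem _ _ (by omega), List.getD_eq_getElem _ _ (by omega),
      List.getElem_append_left hi]
  have hft : ∀ j, j < L → (A ++ T).getD (m + j) d = T.getD j d := by
    intro j hj
    rw [List.getD_eq_getElem _ _ (by rw [hlen]; omega), List.getD_eq_getElem _ _ (by omega)]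
    rw [List.getElem_append_right (by omega)]
    congr 1
    omega
  -- chain facts
  have hlent : (A ++ [t]).length = m + 1 := by simp [hm]
  have hfat : ∀ i, i < m → (A ++ [t]).getD i d = A.getD i d := by
    intro i hi
    rw [List.getD_eq_getElem _ _ (by omega), List.getD_eq_getElem _ _ (by omega),
      List.getElem_append_left (by omega)]
  have hfatm : (A ++ [t]).getD m d = t := by
    rw [List.getD_eq_getElem _ _ (by omega), List.getElem_append_right (by omega)]
    simp [hm]
  have hAA : ∀ i, i + 1 < m → G.Adj (A.getD i d) (A.getD (i + 1) d) := by
    intro i hi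
    have := chain'_getD hch d i (by omega)
    rwa [hfat i (by omega), hfat (i + 1) (by omega)] at this
  have hAt : G.Adj (A.getD (m - 1) d) t := by
    have := chain'_getD hch d (m - 1) (by omega)
    rwa [hfat (m - 1) (by omega), show m - 1 + 1 = m from by omega, hfatm] at this
  -- positions of t and u0
  have hit : T.idxOf t < L := List.idxOf_lt_length_iff.2 ht
  have hitv : T.getD (T.idxOf t) d = t := by
    rw [List.getD_eq_getElem _ _ (by omega)]; exact List.getElem_idxOf hit
  have hiu : T.idxOf u0 < L := List.idxOf_lt_length_iff.2 hu0
  have hiuv : T.getD (T.idxOf u0) d = u0 := by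
    rw [List.getD_eq_getElem _ _ (by omega)]; exact List.getElem_idxOf hiu
  have hhead : A.getD 0 d = A.head hA := by
    rcases A with _ | ⟨a, A'⟩
    · exact absurd rfl hA
    · simp
  intro i hi
  rw [hlen] at hi
  rcases Nat.lt_or_ge i m with him | him
  · rcases Nat.eq_zero_or_pos i with rfl | hipos
    · -- i = 0 : witnesses u0 and (A[1] or t)
      rcases Nat.lt_or_ge 1 m with hm2 | hm2
      · refine ⟨m + T.idxOf u0, 1, by omega, by omega, by omega, by omega, by omega,
          by omega, by omega, ?_, ?_⟩
        · rw [hfa 0 (by omega), hft _ hiu, hhead, hiuv]; exact hadj hA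
        · rw [hfa 0 (by omega), hfa 1 (by omega)]; exact hAA 0 (by omega)
      · -- m = 1
        have hmeq : m = 1 := by omega
        have hut : u0 ≠ t := h1 hmeq
        have hne : T.idxOf u0 ≠ T.idxOf t := by
          intro h
          apply hut
          rw [← hiuv, ← hitv, h]
        refine ⟨m + T.idxOf u0, m + T.idxOf t, by omega, by omega, by omega, by omega,
          by omega, by omega, by omega, ?_, ?_⟩
        · rw [hfa 0 (by omega), hft _ hiu, hhead, hiuv]; exact hadj hA
        · rw [hfa 0 (by omega), hft _ hit, hitv]
          have : A.getD 0 d = A.getD (m - 1) d := by rw [hmeq]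
          rw [this]; exact hAt
    · -- 1 ≤ i < m : witnesses i-1 and (i+1 or t)
      rcases Nat.lt_or_ge (i + 1) m with hi1 | hi1
      · refine ⟨i - 1, i + 1, by omega, by omega, by omega, by omega, by omega,
          by omega, by omega, ?_, ?_⟩
        · rw [hfa i (by omega), hfa (i - 1) (by omega)]
          have := hAA (i - 1) (by omega)
          rw [show i - 1 + 1 = i from by omega] at this
          exact this.symm
        · rw [hfa i (by omega), hfa (i + 1) (by omega)]; exact hAA i hi1
      · -- i = m - 1
        have hieq : i = m - 1 := by omega
        refine ⟨i - 1, m + T.idxOf t, by omega, by omega, by omega, by omega, by omega,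
          by omega, by omega, ?_, ?_⟩
        · rw [hfa i (by omega), hfa (i - 1) (by omega)]
          have := hAA (i - 1) (by omega)
          rw [show i - 1 + 1 = i from by omega] at this
          exact this.symm
        · rw [hfa i (by omega), hft _ hit, hitv, hieq]; exact hAt
  · -- i ≥ m : from old GoodL
    obtain ⟨j, k, hj, hk, hjk, hji, hki, hij, hik, ha1, ha2⟩ := hG (i - m) (by omega)
    refine ⟨m + j, m + k, by omega, by omega, by omega, by omega, by omega, by omega,
      by omega, ?_, ?_⟩
    · rw [show i = m + (i - m) from by omega, hft _ (by omega), hft _ (by omega)]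
      exact ha1
    · rw [show i = m + (i - m) from by omega, hft _ (by omega), hft _ (by omega)]
      exact ha2


lemma extendAll {G : SimpleGraph V} [Fintype V] (hconn : G.Connected)
    (hbridge : ∀ e, ¬ G.IsBridge e) (d : V) :
    ∀ (n : ℕ) (T : List V), T.Nodup → GoodL G d T → 3 ≤ T.length →
      Fintype.card V ≤ T.length + n →
      ∃ R : List V, (R ++ T).Nodup ∧ GoodL G d (R ++ T) ∧ ∀ v : V, v ∈ R ++ T := by
  classical
  intro n
  induction n with
  | zero =>
    intro T hnd hg h3 hcard
    refine ⟨[], by simpa, by simpa, ?_⟩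
    have hcV : T.toFinset.card = T.length := List.toFinset_card_of_nodup hnd
    have huniv : T.toFinset = Finset.univ := by
      apply Finset.eq_univ_of_card
      have := Finset.card_le_univ T.toFinset
      omega
    intro v
    have : v ∈ T.toFinset := huniv ▸ Finset.mem_univ v
    simpa using this
  | succ n ih =>
    intro T hnd hg h3 hcard
    by_cases hall : ∀ v : V, v ∈ T
    · exact ⟨[], by simpa, by simpa, hall⟩
    · push_neg at hall
      obtain ⟨v, hv⟩ := hall
      obtain ⟨A, t, u0, hAne, hAT, hAnd, ht, hu0, hch, hadj, h1⟩ :=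
        earStep hconn hbridge (T := T) (by intro h; rw [h] at h3; simp at h3) hv
      have hnd' : (A ++ T).Nodup := hAnd.append hnd hAT
      have hg' : GoodL G d (A ++ T) := goodPrepend hg h3 hnd hAne hAnd hAT ht hu0 hch hadj h1
      have hA1 : 1 ≤ A.length := by
        rcases A with _ | _
        · exact absurd rfl hAne
        · simp
      obtain ⟨R', hnd'', hg'', hall''⟩ := ih (A ++ T) hnd' hg'
        (by rw [List.length_append]; omega) (by rw [List.length_append]; omega)
      refine ⟨R' ++ A, ?_, ?_, ?_⟩ <;> rw [List.append_assoc]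
      · exact hnd''
      · exact hg''
      · exact hall''


lemma cycleGood {G : SimpleGraph V} {d x : V} {w' : G.Walk x x} (hw' : w'.IsCycle) :
    w'.support.tail.Nodup ∧ 3 ≤ w'.support.tail.length ∧
    (∀ u, u ∈ w'.support.tail ↔ u ∈ w'.support) ∧
    w'.support.tail.getD (w'.support.tail.length - 1) d = x ∧
    GoodL G d w'.support.tail := by
  classical
  set C := w'.support.tail with hC
  have hsup : w'.support = x :: C := w'.support_eq_cons
  have hlsup : w'.support.length = w'.length + 1 := w'.length_support
  have hLC : C.length = w'.length := by
    rw [hsup] at hlsup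
    simpa using hlsup
  have h3 : 3 ≤ C.length := hLC ▸ hw'.three_le_length
  have hsne : w'.support ≠ [] := w'.support_ne_nil
  have hlast : C.getD (C.length - 1) d = x := by
    have h1 : w'.support.getLast hsne = x := w'.getLast_support
    rw [List.getLast_eq_getElem] at h1
    have h2 : w'.support.getD (w'.support.length - 1) d = x := by
      rw [List.getD_eq_getElem _ _ (by omega)]; exact h1
    rw [hsup] at h2
    rw [show (x :: C).length - 1 = (C.length - 1) + 1 from by simp; omega] at h2
    rwa [List.getD_cons_succ] at h2
  have hmem : ∀ u, u ∈ C ↔ u ∈ w'.support := by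
    intro u
    rw [hsup]
    constructor
    · exact fun h => List.mem_cons_of_mem _ h
    · intro h
      rcases List.mem_cons.1 h with rfl | h
      · rw [← hlast]
        rw [List.getD_eq_getElem _ _ (by omega)]
        exact List.getElem_mem _
      · exact h
  have hcha := w'.isChain_adj_support
  have hgetD : ∀ i, w'.support.getD (i + 1) d = C.getD i d := by
    intro i; rw [hsup, List.getD_cons_succ]
  have hCC : ∀ i, i + 1 < C.length → G.Adj (C.getD i d) (C.getD (i + 1) d) := by
    intro i hi
    have := chain'_getD hcha d (i + 1) (by omega)
    rwa [hgetD, hgetD] at this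
  have hx0 : G.Adj x (C.getD 0 d) := by
    have := chain'_getD hcha d 0 (by omega)
    rwa [show w'.support.getD 0 d = x from by rw [hsup]; rfl, hgetD] at this
  refine ⟨hw'.support_nodup, h3, hmem, hlast, ?_⟩
  intro i hi
  rcases Nat.eq_zero_or_pos i with rfl | hipos
  · refine ⟨1, C.length - 1, by omega, by omega, by omega, by omega, by omega, by omega,
      by omega, ?_, ?_⟩
    · exact hCC 0 (by omega)
    · rw [hlast]; exact hx0.symm
  · refine ⟨i - 1, i + 1, by omega, by omega, by omega, by omega, by omega, by omega,
      by omega, ?_, ?_⟩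
    · have := hCC (i - 1) (by omega)
      rw [show i - 1 + 1 = i from by omega] at this
      exact this.symm
    · exact hCC i (by omega)

end Stmt9Aux

open Stmt9Aux in
/-- vertex ordering of a 2-edge-connected graph ending with a shortest cycle. -/
theorem stmt_9 {V : Type*} [Fintype V] (G : SimpleGraph V)
    (hconn : G.Connected) (hcard : 2 ≤ Fintype.card V)
    (hbridge : ∀ e, ¬ G.IsBridge e)
    (v : V) (w : G.Walk v v) (hw : w.IsCycle)
    (hshort : ∀ (u : V) (w' : G.Walk u u), w'.IsCycle → w.length ≤ w'.length)
    (x : V) (hx : x ∈ w.support) :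
    ∃ σ : Fin (Fintype.card V) ≃ V,
      (∀ i : Fin (Fintype.card V), i.val + 2 ≤ Fintype.card V →
        ∃ j, i < j ∧ G.Adj (σ i) (σ j)) ∧
      (∀ i : Fin (Fintype.card V), 1 ≤ i.val → i.val + 2 ≤ Fintype.card V →
        2 ≤ {j : Fin (Fintype.card V) | i.val - 1 ≤ j.val ∧ G.Adj (σ i) (σ j)}.ncard) ∧
      (∃ ℓ : ℕ, ℓ + 3 ≤ Fintype.card V ∧
        {u | ∃ j : Fin (Fintype.card V), ℓ ≤ j.val ∧ σ j = u} = {u | u ∈ w.support} ∧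
        ∀ i : Fin (Fintype.card V), i.val = Fintype.card V - 1 → σ i = x) := by
  classical
  set w' := w.rotate x hx with hw'def
  have hw' : w'.IsCycle := hw.rotate hx
  obtain ⟨hnd0, h30, hmem0, hlast0, hg0⟩ := cycleGood (d := x) hw'
  obtain ⟨_, _, hmemv, _, _⟩ := cycleGood (d := x) hw
  set C := w'.support.tail with hC
  have hrot : w'.support.tail ~r w.support.tail := SimpleGraph.Walk.support_rotate w x hx
  have hmemw : ∀ u, u ∈ C ↔ u ∈ w.support := fun u => (hrot.perm.mem_iff).trans (hmemv u)
  obtain ⟨R, hndT, hgT, hallT⟩ := extendAll hconn hbridge x (Fintype.card V) C hnd0 hg0 h30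
    (by omega)
  set T := R ++ C with hT
  set n := Fintype.card V with hn
  have hlenT : T.length = n := by
    have h1 : T.toFinset.card = T.length := List.toFinset_card_of_nodup hndT
    have h2 : T.toFinset = Finset.univ :=
      Finset.eq_univ_iff_forall.2 (fun u => List.mem_toFinset.2 (hallT u))
    rw [← h1, h2, Finset.card_univ]
  -- the equiv
  have hinj : Function.Injective (fun i : Fin n => T.getD i.val x) := by
    intro i j hij
    simp only at hij
    rw [List.getD_eq_getElem _ _ (by omega), List.getD_eq_getElem _ _ (by omega)] at hij
    have h2 := List.nodup_iff_injective_getElem.1 hndT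
      (a₁ := ⟨i.val, by omega⟩) (a₂ := ⟨j.val, by omega⟩) hij
    exact Fin.ext (Fin.mk_eq_mk.1 h2)
  have hsurj : Function.Surjective (fun i : Fin n => T.getD i.val x) := by
    intro u
    obtain ⟨i, hi, heq⟩ := List.mem_iff_getElem.1 (hallT u)
    refine ⟨⟨i, by omega⟩, ?_⟩
    show T.getD i x = u
    rw [List.getD_eq_getElem _ _ (by omega)]; exact heq
  set σ : Fin n ≃ V := Equiv.ofBijective _ ⟨hinj, hsurj⟩ with hσdef
  refine ⟨σ, ?_, ?_, ?_⟩
  · intro i hi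
    obtain ⟨j, k, hj, hk, hjk, hji, hki, hij, hik, ha1, ha2⟩ := hgT i.val (by omega)
    have key : ∃ j', j' < n ∧ i.val < j' ∧ G.Adj (T.getD i.val x) (T.getD j' x) := by
      rcases Nat.lt_or_ge i.val j with h | h
      · exact ⟨j, by omega, h, ha1⟩
      · rcases Nat.lt_or_ge i.val k with h2 | h2
        · exact ⟨k, by omega, h2, ha2⟩
        · omega
    obtain ⟨j', h1, h2, h3⟩ := key
    exact ⟨⟨j', h1⟩, by rw [Fin.lt_def]; exact h2, h3⟩
  · intro i h1i h2i
    obtain ⟨j, k, hj, hk, hjk, hji, hki, hij, hik, ha1, ha2⟩ := hgT i.val (by omega)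
    have h2 : 1 < {j' : Fin n | i.val - 1 ≤ j'.val ∧ G.Adj (σ i) (σ j')}.ncard :=
      (Set.one_lt_ncard_iff (Set.toFinite _)).2
      ⟨(⟨j, by omega⟩ : Fin n), (⟨k, by omega⟩ : Fin n),
        ⟨by simp only [Fin.val_mk]; omega, ha1⟩,
        ⟨by simp only [Fin.val_mk]; omega, ha2⟩,
         by simp only [ne_eq, Fin.mk.injEq]; omega⟩
    omega
  · have hnsplit : n = R.length + C.length := by
      rw [← hlenT, hT, List.length_append]
    have hftC : ∀ j, j < C.length → T.getD (R.length + j) x = C.getD j x := by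
      intro j hjC
      rw [List.getD_eq_getElem _ _ (by omega), List.getD_eq_getElem _ _ (by omega)]
      have h9 := List.getElem_append_right (as := R) (bs := C) (i := R.length + j)
        (h₁ := Nat.le_add_right _ _) (h₂ := by simpa using hjC)
      simpa [Nat.add_sub_cancel_left, hT] using h9
    refine ⟨R.length, by omega, ?_, ?_⟩
    · ext u
      simp only [Set.mem_setOf_eq]
      constructor
      · rintro ⟨j, hj1, rfl⟩
        show (T.getD j.val x) ∈ w.support
        obtain ⟨q, hq⟩ : ∃ q, j.val = R.length + q ∧ q < C.length :=
          ⟨j.val - R.length, by omega, by have := j.isLt; omega⟩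
        rw [hq.1, hftC _ hq.2]
        rw [← hmemw]
        rw [List.getD_eq_getElem _ _ (by have := j.isLt; omega)]
        exact List.getElem_mem _
      · intro hu
        obtain ⟨i2, hi2, heq⟩ := List.mem_iff_getElem.1 ((hmemw u).2 hu)
        refine ⟨⟨R.length + i2, by omega⟩, by simp, ?_⟩
        show T.getD (R.length + i2) x = u
        rw [hftC _ hi2, List.getD_eq_getElem _ _ (by omega)]
        exact heq
    · intro i hival
      show T.getD i.val x = x
      rw [hival, show n - 1 = R.length + (C.length - 1) from by omega,
        hftC _ (by omega), hlast0]
end
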